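/- Let $m > n$ be positive real numbers (or positive integers) and let $\nu$ be a nonnegative integer. Then $2^{-2\nu-1}\binom{2\nu+1}{\nu+1}\, m^{-1/2}(m^{1/2}-n^{1/2})^{2\nu+2} = \sum_{\mu=0}^{\nu}\binom{\nu+1/2}{\nu-\mu}\binom{\nu+1/2}{\mu} m^{\nu-\mu}\left(m^{\mu-2\nu-1/2}P_{3+2\nu,\,1/2-\mu}(m-n,\,n)-n^{1/2+\mu}\right)$, where $P_{a,b}(X,Y)=\sum_{j=0}^{a-2}\binom{j+b-2}{j}X^j(X+Y)^{a-j-2}$ and binomial coefficients with half-integer arguments are defined via the Gamma function. -/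

import Mathlib

/-- The generalized binomial coefficient `x choose k` for real `x` and natural `k`,
defined via the Gamma function: `Γ(x+1) / (Γ(k+1) Γ(x-k+1))`. -/
noncomputable def gammaBinom (x : ℝ) (k : ℕ) : ℝ :=
  Real.Gamma (x + 1) / (Real.Gamma ((k : ℝ) + 1) * Real.Gamma (x - (k : ℝ) + 1))

/-- The polynomial `P_{a,b}(X,Y) = ∑_{j=0}^{a-2} (j+b-2 choose j) X^j (X+Y)^{a-j-2}`. -/
noncomputable def Pab (a : ℕ) (b : ℝ) (X Y : ℝ) : ℝ :=
  ∑ j ∈ Finset.range (a - 1), gammaBinom ((j : ℝ) + b - 2) j * X ^ j * (X + Y) ^ (a - j - 2)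

/-!
Write `m = s²` and `n = (s u)²`. The values of `Γ` at half-integers turn the weight
`(ν+1/2 choose ν-μ) (ν+1/2 choose μ)` into `2^{-2ν-1} C(2ν+1, ν+1) C(2ν+2, 2μ+1)`, and upper
negation turns `P_{3+2ν, 1/2-μ}(m-n, n)` into `m^{2ν+1} T_μ(u² - 1)`, where `T_μ` is the
truncation below degree `N = 2ν+2` of the binomial series of `(1+z)^{μ+1/2}`. After cancelling
`s^{2ν+1}` the claim reads `∑_μ C(N, 2μ+1) (T_μ(u² - 1) - u^{2μ+1}) = (1 - u)^N`.

In the power series ring put `W = (1+X)^{1/2}`. Then `(1 - W)^N = ∑_k (-1)^k C(N,k) (1+X)^{k/2}`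
is divisible by `X^N`, so the truncations below degree `N` of the summands cancel. For even
`k = 2i` the truncation is the polynomial `(1+z)^i`, which is `u^{2i}` at `z = u² - 1`; what is
left is the binomial expansion of `(1 - u)^N`.
-/

open Finset PowerSeries
open scoped Nat

namespace PowerSeries

variable {R A : Type*} [CommRing R] [BinomialRing R]

theorem binomialSeries_nsmul [Ring A] [Algebra R A] (r : R) (k : ℕ) :
    binomialSeries A (k • r) = binomialSeries A r ^ k := by
  induction k with
  | zero => simp
  | succ k ih => rw [succ_nsmul, binomialSeries_add, ih, pow_succ]

theorem trunc_one_sub_binomialSeries_pow [Ring A] [Algebra R A] (r : R) (N : ℕ) :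
    trunc N ((1 - binomialSeries A r) ^ N) = 0 := by
  obtain ⟨g, hg⟩ : X ∣ 1 - binomialSeries A r := by simp [X_dvd_iff]
  rw [hg, ((commute_X g).symm).mul_pow, trunc_X_pow_self_mul]

variable [CommRing A] [Algebra R A]

theorem sum_neg_one_pow_mul_choose_smul_trunc_binomialSeries_eq_zero (r : R) (N : ℕ) :
    ∑ k ∈ range (N + 1), ((-1) ^ k * N.choose k : ℤ) • trunc N (binomialSeries A (k • r)) =
      0 := by
  rw [← trunc_one_sub_binomialSeries_pow r N, sub_eq_neg_add, add_pow, map_sum]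
  refine sum_congr rfl fun k _ => ?_
  rw [binomialSeries_nsmul, ← map_zsmul, neg_pow, one_pow, mul_one, zsmul_eq_mul]
  push_cast
  ring_nf

theorem eval_trunc_binomialSeries_natCast {i N : ℕ} (h : i < N) (z : A) :
    (trunc N (binomialSeries A (i : R))).eval z = (1 + z) ^ i := by
  have hpoly : (1 + X : A⟦X⟧) ^ i = (((1 + Polynomial.X) ^ i : Polynomial A) : A⟦X⟧) := by
    simp
  rw [binomialSeries_nat, hpoly, trunc_coe_eq_self]
  · simp
  · refine lt_of_le_of_lt ?_ h
    compute_degree!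

end PowerSeries

theorem Finset.sum_range_two_mul_add_one_of_even {M : Type*} [AddCommMonoid M] {f : ℕ → M}
    (hf : ∀ i, f (2 * i) = 0) (n : ℕ) :
    ∑ k ∈ range (2 * n + 1), f k = ∑ i ∈ range n, f (2 * i + 1) := by
  induction n with
  | zero => simp [hf 0]
  | succ n ih =>
    rw [show 2 * (n + 1) + 1 = 2 * n + 1 + 1 + 1 by ring, sum_range_succ, sum_range_succ, ih,
      sum_range_succ, show 2 * n + 1 + 1 = 2 * (n + 1) by ring, hf, add_zero]

theorem sum_choose_odd_mul_eval_trunc_binomialSeries (ν : ℕ) (u : ℝ) :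
    ∑ μ ∈ range (ν + 1), ((2 * ν + 2).choose (2 * μ + 1) : ℝ) *
        ((trunc (2 * ν + 2) (binomialSeries ℝ ((μ : ℝ) + 1 / 2))).eval (u ^ 2 - 1) -
          u ^ (2 * μ + 1)) =
      (1 - u) ^ (2 * ν + 2) := by
  set N := 2 * ν + 2
  set f : ℕ → ℝ := fun k => ((-1) ^ k * N.choose k : ℤ) *
    ((trunc N (binomialSeries ℝ (k • (1 / 2 : ℝ)))).eval (u ^ 2 - 1) - u ^ k) with hf
  have htrunc := congrArg (Polynomial.eval (u ^ 2 - 1))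
    (sum_neg_one_pow_mul_choose_smul_trunc_binomialSeries_eq_zero (A := ℝ) (1 / 2 : ℝ) N)
  simp only [Polynomial.eval_finsetSum, zsmul_eq_mul, Polynomial.eval_mul,
    Polynomial.eval_intCast, Polynomial.eval_zero] at htrunc
  have hbinom : ∑ k ∈ range (N + 1), ((-1) ^ k * N.choose k : ℤ) * u ^ k = (1 - u) ^ N := by
    rw [sub_eq_neg_add, add_pow]
    refine sum_congr rfl fun k _ => ?_
    push_cast
    ring
  have hsum : ∑ k ∈ range (N + 1), f k = -(1 - u) ^ N := by
    simp only [hf, mul_sub, sum_sub_distrib, htrunc, hbinom, zero_sub]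
  have heven : ∀ i, f (2 * i) = 0 := by
    intro i
    rcases lt_or_ge N (2 * i) with h | h
    · simp [hf, Nat.choose_eq_zero_of_lt h]
    · have hi : (2 * i) • (1 / 2 : ℝ) = (i : ℕ) := by rw [nsmul_eq_mul]; push_cast; ring
      simp only [hf, hi, eval_trunc_binomialSeries_natCast (by omega : i < N), pow_mul]
      ring
  rw [show N + 1 = 2 * (ν + 1) + 1 by ring, sum_range_two_mul_add_one_of_even heven] at hsum
  rw [← neg_inj, ← hsum, ← sum_neg_distrib]
  refine sum_congr rfl fun μ _ => ?_
  have hμ : (2 * μ + 1) • (1 / 2 : ℝ) = μ + 1 / 2 := by rw [nsmul_eq_mul]; push_cast; ring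
  simp only [hf, hμ, pow_succ, pow_mul]
  push_cast
  ring

theorem intCast_add_half_ne_intCast (a n : ℤ) : (a : ℝ) + 1 / 2 ≠ n := by
  intro h
  have : (2 * a + 1 : ℤ) = 2 * n := by exact_mod_cast (by linarith : (2 * a + 1 : ℝ) = 2 * n)
  omega

theorem Real.Gamma_ne_zero_of_forall_ne_intCast {x : ℝ} (hx : ∀ n : ℤ, x ≠ n) :
    Real.Gamma x ≠ 0 :=
  Real.Gamma_ne_zero fun m h => hx (-m) (by simp [h])

theorem gammaBinom_eq_choose {x : ℝ} (hx : ∀ n : ℤ, x ≠ n) (k : ℕ) :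
    gammaBinom x k = Ring.choose x k := by
  induction k with
  | zero =>
    have : Real.Gamma (x + 1) ≠ 0 :=
      Real.Gamma_ne_zero_of_forall_ne_intCast fun n h => hx (n - 1) (by push_cast; linarith)
    simp [gammaBinom, this]
  | succ k ih =>
    have hxk : x - k ≠ 0 := fun h => hx k (by push_cast; linarith)
    have hΓ : Real.Gamma (x - k) ≠ 0 :=
      Real.Gamma_ne_zero_of_forall_ne_intCast fun n h => hx (n + k) (by push_cast; linarith)
    have hgamma : ((k : ℝ) + 1) * gammaBinom x (k + 1) = (x - k) * gammaBinom x k := by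
      simp only [gammaBinom, Nat.cast_succ, Real.Gamma_add_one (by positivity : (k : ℝ) + 1 ≠ 0),
        show x - (k + 1) + 1 = x - k by ring, Real.Gamma_add_one hxk]
      field_simp
    have hchoose : ((k : ℝ) + 1) * Ring.choose x (k + 1) = (x - k) * Ring.choose x k := by
      have := Ring.choose_smul_choose x (n := k + 1) (k := k) (by omega)
      rw [Nat.choose_succ_self_right, Nat.add_sub_cancel_left, Ring.choose_one_right,
        nsmul_eq_mul] at this
      push_cast at this
      rw [this, mul_comm]
    exact mul_left_cancel₀ (by positivity) (hgamma.trans (ih ▸ hchoose.symm))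

theorem gammaBinom_add_sub_two_self {b : ℝ} (hb : ∀ n : ℤ, b ≠ n) (j : ℕ) :
    gammaBinom (j + b - 2) j = (-1) ^ j * Ring.choose (1 - b) j := by
  rw [gammaBinom_eq_choose fun n h => hb (n - j + 2) (by push_cast; linarith),
    show (j : ℝ) + b - 2 = -(2 - b - j) by ring, Ring.choose_neg, Units.smul_def,
    zsmul_eq_mul, Int.cast_negOnePow_natCast, show 2 - b - j + j - 1 = 1 - b by ring]

theorem Pab_eq_mul_eval_trunc {b : ℝ} (hb : ∀ n : ℤ, b ≠ n) (a : ℕ) {X Y : ℝ}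
    (hXY : X + Y ≠ 0) :
    Pab a b X Y =
      (X + Y) ^ (a - 2) * (trunc (a - 1) (binomialSeries ℝ (1 - b))).eval (-X / (X + Y)) := by
  rw [Pab, Polynomial.eval, eval₂_trunc_eq_sum_range, mul_sum]
  refine sum_congr rfl fun j hj => ?_
  have hja : a - 2 = (a - j - 2) + j := by have := mem_range.mp hj; omega
  rw [gammaBinom_add_sub_two_self hb, hja, pow_add, div_pow, neg_pow X]
  simp only [binomialSeries_coeff, smul_eq_mul, mul_one, RingHom.id_apply]
  field_simp

theorem Nat.factorial_two_mul_add_one (n : ℕ) : (2 * n + 1)! = (2 * n + 1)‼ * 2 ^ n * n ! := by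
  rw [Nat.factorial_eq_mul_doubleFactorial, Nat.doubleFactorial_two_mul, mul_assoc]

theorem gammaBinom_sub_mul_gammaBinom {μ ν : ℕ} (h : μ ≤ ν) :
    gammaBinom ((ν : ℝ) + 1 / 2) (ν - μ) * gammaBinom ((ν : ℝ) + 1 / 2) μ =
      (2 : ℝ) ^ (-(2 * (ν : ℤ)) - 1) * ((2 * ν + 1).choose (ν + 1) : ℝ) *
        ((2 * ν + 2).choose (2 * μ + 1) : ℝ) := by
  obtain ⟨a, rfl⟩ := Nat.exists_eq_add_of_le h
  simp only [gammaBinom, Nat.add_sub_cancel_left]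
  rw [show ((μ + a : ℕ) : ℝ) + 1 / 2 + 1 = ((μ + a : ℕ) : ℝ) + 1 + 1 / 2 by ring,
    show ((μ + a : ℕ) : ℝ) + 1 / 2 - a + 1 = (μ : ℝ) + 1 + 1 / 2 by push_cast; ring,
    show ((μ + a : ℕ) : ℝ) + 1 / 2 - μ + 1 = (a : ℝ) + 1 + 1 / 2 by push_cast; ring]
  simp only [Real.Gamma_nat_add_one_add_half, Real.Gamma_nat_eq_factorial]
  rw [Nat.cast_choose ℝ (by omega : μ + a + 1 ≤ 2 * (μ + a) + 1),
    Nat.cast_choose ℝ (by omega : 2 * μ + 1 ≤ 2 * (μ + a) + 2),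
    show 2 * (μ + a) + 1 - (μ + a + 1) = μ + a by omega,
    show 2 * (μ + a) + 2 - (2 * μ + 1) = 2 * a + 1 by omega,
    Nat.factorial_succ (2 * (μ + a) + 1), Nat.factorial_succ (μ + a),
    Nat.factorial_two_mul_add_one, Nat.factorial_two_mul_add_one μ,
    Nat.factorial_two_mul_add_one a,
    show -(2 * ((μ + a : ℕ) : ℤ)) - 1 = -((2 * (μ + a) + 1 : ℕ) : ℤ) by push_cast; ring,
    zpow_neg, zpow_natCast]
  push_cast
  field_simp
  ring

theorem Real.sq_rpow_natCast_add_half {s : ℝ} (hs : 0 ≤ s) (k : ℕ) :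
    (s ^ 2) ^ ((k : ℝ) + 1 / 2) = s ^ (2 * k + 1) := by
  rw [← Real.rpow_natCast s 2, ← Real.rpow_mul hs, ← Real.rpow_natCast]
  push_cast
  ring_nf

theorem Pab_three_add_two_mul_sq_sub_sq (ν μ : ℕ) {s : ℝ} (hs : s ≠ 0) (u : ℝ) :
    Pab (3 + 2 * ν) (1 / 2 - μ) (s ^ 2 - (s * u) ^ 2) ((s * u) ^ 2) =
      (s ^ 2) ^ (2 * ν + 1) *
        (trunc (2 * ν + 2) (binomialSeries ℝ ((μ : ℝ) + 1 / 2))).eval (u ^ 2 - 1) := by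
  have hb : ∀ k : ℤ, (1 / 2 - μ : ℝ) ≠ k := fun k h =>
    intCast_add_half_ne_intCast (-μ) k (by push_cast; linarith)
  rw [Pab_eq_mul_eval_trunc hb _ (by simp [hs]), show 3 + 2 * ν - 2 = 2 * ν + 1 by omega,
    show 3 + 2 * ν - 1 = 2 * ν + 2 by omega, sub_add_cancel,
    show 1 - (1 / 2 - (μ : ℝ)) = μ + 1 / 2 by ring,
    show -(s ^ 2 - (s * u) ^ 2) / s ^ 2 = u ^ 2 - 1 by field_simp; ring]

theorem explicit_pihol_poly_summand {μ ν : ℕ} (h : μ ≤ ν) {s u : ℝ} (hs : 0 < s) (hu : 0 ≤ u) :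
    gammaBinom ((ν : ℝ) + 1 / 2) (ν - μ) * gammaBinom ((ν : ℝ) + 1 / 2) μ * (s ^ 2) ^ (ν - μ) *
        ((s ^ 2) ^ ((μ : ℝ) - 2 * (ν : ℝ) - 1 / 2) *
            Pab (3 + 2 * ν) (1 / 2 - (μ : ℝ)) (s ^ 2 - (s * u) ^ 2) ((s * u) ^ 2) -
          ((s * u) ^ 2) ^ ((1 : ℝ) / 2 + (μ : ℝ))) =
      s ^ (2 * ν + 1) * ((2 : ℝ) ^ (-(2 * (ν : ℤ)) - 1) * ((2 * ν + 1).choose (ν + 1) : ℝ) *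
        (((2 * ν + 2).choose (2 * μ + 1) : ℝ) *
          ((trunc (2 * ν + 2) (binomialSeries ℝ ((μ : ℝ) + 1 / 2))).eval (u ^ 2 - 1) -
            u ^ (2 * μ + 1)))) := by
  obtain ⟨a, rfl⟩ := Nat.exists_eq_add_of_le h
  have hexp : (s ^ 2) ^ ((μ : ℝ) - 2 * ((μ + a : ℕ) : ℝ) - 1 / 2) =
      s ^ (2 * μ + 1) / (s ^ 2) ^ (2 * (μ + a) + 1) := by
    rw [show (μ : ℝ) - 2 * ((μ + a : ℕ) : ℝ) - 1 / 2 =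
        (μ + 1 / 2) - ((2 * (μ + a) + 1 : ℕ) : ℝ) by push_cast; ring,
      Real.rpow_sub (by positivity), Real.rpow_natCast, Real.sq_rpow_natCast_add_half hs.le]
  rw [gammaBinom_sub_mul_gammaBinom h, Pab_three_add_two_mul_sq_sub_sq _ _ hs.ne', hexp,
    add_comm ((1 : ℝ) / 2), Real.sq_rpow_natCast_add_half (by positivity), Nat.add_sub_cancel_left]
  field_simp
  ring

/-- For reals `m > n > 0` and a nonnegative integer `ν`,
`2^{-2ν-1} C(2ν+1,ν+1) m^{-1/2}(m^{1/2}-n^{1/2})^{2ν+2}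
  = ∑_{μ=0}^{ν} (ν+1/2 choose ν-μ)(ν+1/2 choose μ) m^{ν-μ}
      (m^{μ-2ν-1/2} P_{3+2ν, 1/2-μ}(m-n, n) - n^{1/2+μ})`. -/
theorem explicit_pihol_poly (m n : ℝ) (hn : 0 < n) (hmn : n < m) (ν : ℕ) :
    (2 : ℝ) ^ (-(2 * (ν : ℤ)) - 1) * ((2 * ν + 1).choose (ν + 1) : ℝ) *
        (m ^ (-(1 / 2) : ℝ) * (m ^ ((1 : ℝ) / 2) - n ^ ((1 : ℝ) / 2)) ^ (2 * ν + 2)) =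
      ∑ μ ∈ Finset.range (ν + 1),
        gammaBinom ((ν : ℝ) + 1 / 2) (ν - μ) * gammaBinom ((ν : ℝ) + 1 / 2) μ *
          m ^ (ν - μ) *
          (m ^ ((μ : ℝ) - 2 * (ν : ℝ) - 1 / 2) * Pab (3 + 2 * ν) (1 / 2 - (μ : ℝ)) (m - n) n -
            n ^ ((1 : ℝ) / 2 + (μ : ℝ))) := by
  obtain ⟨s, hs, rfl⟩ : ∃ s, 0 < s ∧ s ^ 2 = m :=
    ⟨√m, Real.sqrt_pos.mpr (hn.trans hmn), Real.sq_sqrt (hn.trans hmn).le⟩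
  obtain ⟨u, hu, rfl⟩ : ∃ u, 0 ≤ u ∧ (s * u) ^ 2 = n :=
    ⟨√n / s, by positivity, by rw [mul_div_cancel₀ _ hs.ne', Real.sq_sqrt hn.le]⟩
  have hLHS : (s ^ 2) ^ (-(1 / 2) : ℝ) *
        ((s ^ 2) ^ ((1 : ℝ) / 2) - ((s * u) ^ 2) ^ ((1 : ℝ) / 2)) ^ (2 * ν + 2) =
      s ^ (2 * ν + 1) * (1 - u) ^ (2 * ν + 2) := by
    rw [Real.rpow_neg (by positivity), ← Real.sqrt_eq_rpow, ← Real.sqrt_eq_rpow,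
      Real.sqrt_sq hs.le, Real.sqrt_sq (by positivity), ← mul_one_sub, mul_pow,
      pow_succ s (2 * ν + 1)]
    field_simp
  rw [sum_congr rfl fun μ hμ =>
      explicit_pihol_poly_summand (Nat.le_of_lt_succ (mem_range.mp hμ)) hs hu,
    ← mul_sum, ← mul_sum, sum_choose_odd_mul_eval_trunc_binomialSeries, hLHS]
  ring
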